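/- arXiv:1811.00214 — 12 statements merged into one kernel-verified Lean document; each statement's English description precedes it below -/
import Mathlib

section
/- Let T be a monad on a category C in which idempotents split. If (X,x) is a T-semialgebra and the idempotent x ∘ η_X splits in the category of T-semialgebras as x ∘ η_X = i ∘ p with p ∘ i = 1 on an object (Y,y), then (Y,y) is a genuine T-algebra, i.e. it also satisfies the unit axiom y ∘ η_Y = 1_Y. -/
open CategoryTheory

namespace CategoryTheory.Monad

variable {C : Type*} [Category C] (T : Monad C)

theorem unit_app_comp_comp_eq_comp_unit_app_comp {X Y : C} {x : T.obj X ⟶ X}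
    {y : T.obj Y ⟶ Y} {i : Y ⟶ X} (hi : T.map i ≫ x = y ≫ i) :
    T.η.app Y ≫ y ≫ i = i ≫ T.η.app X ≫ x := by
  rw [← hi, ← Category.assoc, ← T.η.naturality i, Category.assoc, Functor.id_map]

end CategoryTheory.Monad

theorem splitting_of_semialgebra_idempotent_is_algebra_general {C : Type*} [Category C] (T : Monad C)
    (X Y : C) (x : T.obj X ⟶ X) (y : T.obj Y ⟶ Y)
    (p : X ⟶ Y) (i : Y ⟶ X)
    (hi : T.map i ≫ x = y ≫ i)
    (hsplit : p ≫ i = T.η.app X ≫ x) (hpi : i ≫ p = 𝟙 Y) :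
    T.η.app Y ≫ y = 𝟙 Y := by
  have : IsSplitMono i := .mk' ⟨p, hpi⟩
  rw [← cancel_mono i, Category.assoc, T.unit_app_comp_comp_eq_comp_unit_app_comp hi, ← hsplit,
    ← Category.assoc, hpi, Category.id_comp]

/-- If `(X,x)` is a `T`-semialgebra and the idempotent `x ∘ η_X` splits in the
category of `T`-semialgebras as `x ∘ η_X = i ∘ p` with `p ∘ i = 1` on a semialgebra `(Y,y)`,
then `(Y,y)` satisfies the unit axiom, i.e. it is a genuine `T`-algebra. -/
theorem splitting_of_semialgebra_idempotent_is_algebra {C : Type*} [Category C] (T : Monad C)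
    (X Y : C) (x : T.obj X ⟶ X) (y : T.obj Y ⟶ Y)
    (hx : T.map x ≫ x = T.μ.app X ≫ x) (hy : T.map y ≫ y = T.μ.app Y ≫ y)
    (p : X ⟶ Y) (i : Y ⟶ X)
    (hp : T.map p ≫ y = x ≫ p) (hi : T.map i ≫ x = y ≫ i)
    (hsplit : p ≫ i = T.η.app X ≫ x) (hpi : i ≫ p = 𝟙 Y) :
    T.η.app Y ≫ y = 𝟙 Y :=
  splitting_of_semialgebra_idempotent_is_algebra_general T X Y x y p i hi hsplit hpi
end

section
/- Let T be a monad on C with idempotents split in C. The full inclusion I of the category of T-algebras into the category of T-semialgebras has a functor K in the other direction that is simultaneously left and right adjoint to I, where K(X,x) is obtained by splitting the idempotent x ∘ η_X. -/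
/-!
For a semialgebra `(X, x)` the map `e = x ∘ η_X` is an idempotent semialgebra endomorphism:
associativity and the unit law of the monad give `x ∘ e = x` and `x ∘ T e = x`. It is natural
and is the identity on algebras, so every semialgebra map into or out of an algebra absorbs `e`.
Splitting `e` in semialgebras (possible because idempotents split in `C`) yields a retract of
`(X, x)` on which `e` is the identity, i.e. an algebra `K(X, x)`. Absorbing `e` says exactly that
maps `(X, x) → I A` factor uniquely through the retraction and maps `I A → (X, x)` uniquely
through the section, so `K` is both left and right adjoint to `I`.
-/

open CategoryTheory

universe v u

variable {C : Type u} [Category.{v} C]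

/-- A semialgebra for a monad: only the associativity axiom is required. -/
structure Semialgebra (T : Monad C) : Type max u v where
  A : C
  a : T.obj A ⟶ A
  assoc : T.map a ≫ a = T.μ.app A ≫ a

/-- Morphisms of semialgebras. -/
@[ext]
structure SemialgebraHom {T : Monad C} (M N : Semialgebra T) where
  f : M.A ⟶ N.A
  h : T.map f ≫ N.a = M.a ≫ f

instance {T : Monad C} : Category (Semialgebra T) where
  Hom := SemialgebraHom
  id M := ⟨𝟙 M.A, by simp⟩
  comp {M N P} f g :=
    ⟨f.f ≫ g.f, by rw [Functor.map_comp, Category.assoc, g.h, ← Category.assoc, f.h,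
      Category.assoc]⟩
  id_comp f := by apply SemialgebraHom.ext; simp [Category.id_comp]
  comp_id f := by apply SemialgebraHom.ext; simp [Category.comp_id]
  assoc f g h := by apply SemialgebraHom.ext; simp [Category.assoc]

/-- The full inclusion of `T`-algebras into `T`-semialgebras. -/
def semialgebraInclusion (T : Monad C) : Monad.Algebra T ⥤ Semialgebra T where
  obj A := ⟨A.A, A.a, A.assoc.symm⟩
  map f := ⟨f.f, f.h⟩
  map_id _ := rfl
  map_comp _ _ := rfl

namespace Semialgebra

variable {T : Monad C}

@[ext]
lemma hom_ext {M N : Semialgebra T} {f g : M ⟶ N} (h : f.f = g.f) : f = g :=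
  SemialgebraHom.ext h

@[simp]
lemma comp_f {M N P : Semialgebra T} (f : M ⟶ N) (g : N ⟶ P) : (f ≫ g).f = f.f ≫ g.f := rfl

lemma a_comp_unit_comp_a (M : Semialgebra T) : M.a ≫ T.η.app M.A ≫ M.a = M.a := by
  have := T.η.naturality M.a
  simp only [Functor.id_obj, Functor.id_map] at this
  rw [← Category.assoc, this, Category.assoc, M.assoc, ← Category.assoc, T.left_unit]
  exact Category.id_comp M.a

lemma map_unit_comp_a_comp_a (M : Semialgebra T) : T.map (T.η.app M.A ≫ M.a) ≫ M.a = M.a := by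
  rw [Functor.map_comp, Category.assoc, M.assoc, ← Category.assoc, T.right_unit]
  exact Category.id_comp M.a

def idem (M : Semialgebra T) : M ⟶ M where
  f := T.η.app M.A ≫ M.a
  h := by rw [map_unit_comp_a_comp_a, a_comp_unit_comp_a]

@[simp]
lemma idem_f (M : Semialgebra T) : (idem M).f = T.η.app M.A ≫ M.a := rfl

lemma idem_idem (M : Semialgebra T) : idem M ≫ idem M = idem M := by
  ext
  simp [a_comp_unit_comp_a]

lemma idem_naturality {M N : Semialgebra T} (f : M ⟶ N) : f ≫ idem N = idem M ≫ f := by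
  ext
  have := T.η.naturality f.f
  simp only [Functor.id_obj, Functor.id_map] at this
  simp [← f.h, reassoc_of% this]

lemma idem_inclusion_obj (A : Monad.Algebra T) :
    idem ((semialgebraInclusion T).obj A) = 𝟙 _ :=
  hom_ext A.unit

lemma idem_comp_of_algebra {M : Semialgebra T} {A : Monad.Algebra T}
    (f : M ⟶ (semialgebraInclusion T).obj A) : idem M ≫ f = f := by
  rw [← idem_naturality, idem_inclusion_obj, Category.comp_id]

lemma comp_idem_of_algebra {M : Semialgebra T} {A : Monad.Algebra T}
    (g : (semialgebraInclusion T).obj A ⟶ M) : g ≫ idem M = g := by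
  rw [idem_naturality, idem_inclusion_obj, Category.id_comp]

section Splitting

variable {M : Semialgebra T} {e : M ⟶ M} {B : C} (h : Retract B M.A)

def ofSplitting (hri : h.r ≫ h.i = e.f) : Semialgebra T where
  A := B
  a := T.map h.i ≫ M.a ≫ h.r
  assoc := by
    have hr : e.f ≫ h.r = h.r := by rw [← hri, Category.assoc, h.retract, Category.comp_id]
    have := T.μ.naturality h.i
    simp only [Functor.comp_map] at this
    rw [← reassoc_of% this, ← reassoc_of% M.assoc]
    simp only [Functor.map_comp, Category.assoc]
    rw [← T.map_comp_assoc h.r, hri, reassoc_of% e.h, hr]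

def retractOfSplitting (hri : h.r ≫ h.i = e.f) : Retract (ofSplitting h hri) M where
  i.f := h.i
  i.h := by
    dsimp [ofSplitting]
    rw [Category.assoc, Category.assoc, hri, ← e.h, ← T.map_comp_assoc, ← hri,
      h.retract_assoc]
  r.f := h.r
  r.h := by
    dsimp [ofSplitting]
    rw [← T.map_comp_assoc, hri, reassoc_of% e.h, ← hri, Category.assoc, h.retract,
      Category.comp_id]
  retract := hom_ext h.retract

end Splitting

instance [IsIdempotentComplete C] : IsIdempotentComplete (Semialgebra T) where
  idempotents_split M e he := by
    obtain ⟨B, i, r, hir, hri⟩ :=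
      IsIdempotentComplete.idempotents_split M.A e.f (congrArg SemialgebraHom.f he)
    let h := retractOfSplitting (e := e) ⟨i, r, hir⟩ hri
    exact ⟨_, h.i, h.r, h.retract, hom_ext hri⟩

def toAlgebra (M : Semialgebra T) (hM : idem M = 𝟙 M) : Monad.Algebra T where
  A := M.A
  a := M.a
  unit := congrArg SemialgebraHom.f hM
  assoc := M.assoc.symm

lemma idem_eq_id_of_retract {N M : Semialgebra T} (h : Retract N M)
    (hri : h.r ≫ h.i = idem M) : idem N = 𝟙 N :=
  calc idem N = h.i ≫ h.r ≫ idem N := by rw [h.retract_assoc]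
    _ = h.i ≫ h.r ≫ h.i ≫ h.r := by rw [idem_naturality, ← hri, Category.assoc]
    _ = 𝟙 N := by rw [h.retract_assoc, h.retract]

variable (T) in
def fullyFaithfulInclusion : (semialgebraInclusion T).FullyFaithful where
  preimage f := ⟨f.f, f.h⟩

section Reflection

variable [IsIdempotentComplete C]

lemma exists_retract_idem (M : Semialgebra T) :
    ∃ (N : Semialgebra T) (h : Retract N M), h.r ≫ h.i = idem M := by
  obtain ⟨N, i, r, hir, hri⟩ := IsIdempotentComplete.idempotents_split M (idem M) (idem_idem M)
  exact ⟨N, ⟨i, r, hir⟩, hri⟩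

noncomputable def reflectionObj (M : Semialgebra T) : Monad.Algebra T :=
  (exists_retract_idem M).choose.toAlgebra
    (idem_eq_id_of_retract _ (exists_retract_idem M).choose_spec.choose_spec)

noncomputable def reflectionRetract (M : Semialgebra T) :
    Retract ((semialgebraInclusion T).obj (reflectionObj M)) M :=
  (exists_retract_idem M).choose_spec.choose

lemma reflectionRetract_r_i (M : Semialgebra T) :
    (reflectionRetract M).r ≫ (reflectionRetract M).i = idem M :=
  (exists_retract_idem M).choose_spec.choose_spec

lemma reflectionRetract_i_idem (M : Semialgebra T) :
    (reflectionRetract M).i ≫ idem M = (reflectionRetract M).i := by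
  rw [← reflectionRetract_r_i, Retract.retract_assoc]

-- Reducible, so that `(reflection T).obj M` unfolds to `reflectionObj M` during unification.
variable (T) in
noncomputable abbrev reflection : Semialgebra T ⥤ Monad.Algebra T where
  obj := reflectionObj
  map {M N} f := (fullyFaithfulInclusion T).preimage
    ((reflectionRetract M).i ≫ f ≫ (reflectionRetract N).r)
  map_id M := (fullyFaithfulInclusion T).map_injective (by simp)
  map_comp f g := (fullyFaithfulInclusion T).map_injective <| by
    simp only [Functor.map_comp, Functor.FullyFaithful.map_preimage, Category.assoc,
      reassoc_of% reflectionRetract_r_i]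
    rw [reassoc_of% idem_naturality f, reassoc_of% reflectionRetract_i_idem]

variable (T) in
noncomputable def reflectionAdj : reflection T ⊣ semialgebraInclusion T :=
  Adjunction.mkOfHomEquiv
    { homEquiv M A :=
        { toFun g := (reflectionRetract M).r ≫ (semialgebraInclusion T).map g
          invFun f := (fullyFaithfulInclusion T).preimage ((reflectionRetract M).i ≫ f)
          left_inv g := by simp
          right_inv f := by simp [reassoc_of% reflectionRetract_r_i, idem_comp_of_algebra] }
      homEquiv_naturality_left_symm f g := (fullyFaithfulInclusion T).map_injective <| by
        simp [reassoc_of% reflectionRetract_r_i, idem_comp_of_algebra] }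

variable (T) in
noncomputable def coreflectionAdj : semialgebraInclusion T ⊣ reflection T :=
  Adjunction.mkOfHomEquiv
    { homEquiv A M :=
        { toFun g := (fullyFaithfulInclusion T).preimage (g ≫ (reflectionRetract M).r)
          invFun f := (semialgebraInclusion T).map f ≫ (reflectionRetract M).i
          left_inv g := by simp [reflectionRetract_r_i, comp_idem_of_algebra]
          right_inv f := by simp }
      homEquiv_naturality_right f g := (fullyFaithfulInclusion T).map_injective <| by
        simp [reassoc_of% reflectionRetract_r_i, reassoc_of% comp_idem_of_algebra] }

end Reflection

end Semialgebra

/-- if idempotents split in `C`, the full inclusion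
`I : C^T → C^T_s` has a simultaneous left and right adjoint `K`, where `K(X,x)` is
obtained by splitting the idempotent `x ∘ η_X`. -/
theorem inclusion_has_two_sided_adjoint (T : Monad C) [IsIdempotentComplete C] :
    ∃ K : Semialgebra T ⥤ Monad.Algebra T,
      Nonempty (K ⊣ semialgebraInclusion T) ∧
      Nonempty (semialgebraInclusion T ⊣ K) ∧
      ∀ M : Semialgebra T,
        ∃ (p : M ⟶ (semialgebraInclusion T).obj (K.obj M))
          (i : (semialgebraInclusion T).obj (K.obj M) ⟶ M),
          i ≫ p = 𝟙 _ ∧ (p ≫ i).f = T.η.app M.A ≫ M.a :=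
  ⟨Semialgebra.reflection T, ⟨Semialgebra.reflectionAdj T⟩,
    ⟨Semialgebra.coreflectionAdj T⟩,
    fun M => ⟨_, _, (Semialgebra.reflectionRetract M).retract,
      congrArg SemialgebraHom.f (Semialgebra.reflectionRetract_r_i M)⟩⟩
end

section
/- The multiplication μ of the finite power-set monad is weakly cartesian: for every function f : X → Y, finite subset A ⊆ X, and finite subset B = {B₁,…,Bₙ} of finite subsets of Y with f(A) = B₁ ∪ ⋯ ∪ Bₙ, there exist finitely many subsets C₁,…,Cₙ of X with A = C₁ ∪ ⋯ ∪ Cₙ and {f(C₁),…,f(Cₙ)} = {B₁,…,Bₙ}. -/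
/-! The witness is the family of traces of the fibres: `C = {A ∩ f⁻¹(b) | b ∈ B}`. Its union is
`A ∩ f⁻¹(⋃ B) = A ∩ f⁻¹(f(A)) = A`, and `f(A ∩ f⁻¹(b)) = f(A) ∩ b = b` since each `b ⊆ ⋃ B = f(A)`. -/

namespace Finset

variable {X Y : Type*} [DecidableEq Y] (f : X → Y)

theorem image_filter_mem_of_subset_image {A : Finset X} {b : Finset Y} (hb : b ⊆ A.image f) :
    (A.filter (f · ∈ b)).image f = b := by
  rw [← filter_image (p := (· ∈ b)), filter_mem_eq_inter, inter_eq_right.2 hb]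

theorem sup_image_filter_mem [DecidableEq X] (A : Finset X) (B : Finset (Finset Y)) :
    (B.image fun b => A.filter (f · ∈ b)).sup id = A.filter (f · ∈ B.sup id) := by
  ext x
  simp only [mem_sup, mem_image, mem_filter, id_eq, exists_exists_and_eq_and]
  constructor
  · rintro ⟨b, hb, hxA, hfx⟩
    exact ⟨hxA, b, hb, hfx⟩
  · rintro ⟨hxA, b, hb, hfx⟩
    exact ⟨b, hb, hxA, hfx⟩

end Finset

open Finset

/-- The multiplication of the finite power-set monad is weakly cartesian:
for every `f : X → Y`, finite `A ⊆ X` and finite family `B` of finite subsets of `Y` with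
`f(A) = ⋃ B`, there is a finite family `C` of finite subsets of `X` with `A = ⋃ C` and
whose family of images is exactly `B`. -/
theorem finite_powerset_multiplication_weakly_cartesian {X Y : Type*}
    [DecidableEq X] [DecidableEq Y] (f : X → Y)
    (A : Finset X) (B : Finset (Finset Y)) (h : A.image f = B.sup id) :
    ∃ C : Finset (Finset X), C.sup id = A ∧ C.image (fun s => s.image f) = B := by
  refine ⟨B.image fun b => A.filter (f · ∈ b), ?_, ?_⟩
  · rw [sup_image_filter_mem, ← h]
    exact filter_true_of_mem fun x hx => mem_image_of_mem f hx
  · rw [image_image]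
    refine (image_congr fun b hb => ?_).trans image_id
    exact image_filter_mem_of_subset_image f (h ▸ le_sup (f := id) hb)
end

section
/- For a set X, the map δ_X sending an ultrafilter 𝐅 on PX to the set {F ∈ βX : ⋃𝒜 ∈ F for all 𝒜 ∈ 𝐅} satisfies the compatibility with the unit of the power-set monad: δ_X(β(η_X)(G)) consists of exactly the ultrafilters containing every member of G, for G an ultrafilter on X; in particular δ_X(β(η_X)(G)) = {G}. -/
/-! `F ∈ δ_X(β(η_X)(G))` says exactly `F ≤ G` as filters: a member `A` of `G` is recovered as the
union of `η_X '' A ∈ β(η_X)(G)`, and conversely `⋃𝒜` contains `η_X⁻¹' 𝒜 ∈ G`. Ultrafilters are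
maximal, so `F ≤ G` forces `F = G`. -/

/-- The canonical weak distributive law `δ_X : βPX → PβX`:
`δ_X(𝐅) = { F ∈ βX : ⋃𝒜 ∈ F for all 𝒜 ∈ 𝐅 }`. -/
def ultrafilterPowersetDelta (X : Type*) (FF : Ultrafilter (Set X)) : Set (Ultrafilter X) :=
  {F : Ultrafilter X | ∀ 𝒜 ∈ FF, ⋃₀ 𝒜 ∈ F}

namespace Set

variable {X : Type*}

theorem sUnion_image_singleton (A : Set X) : ⋃₀ ((fun x => ({x} : Set X)) '' A) = A := by
  rw [sUnion_image, biUnion_of_singleton]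

theorem preimage_singleton_subset_sUnion (𝒜 : Set (Set X)) :
    (fun x => ({x} : Set X)) ⁻¹' 𝒜 ⊆ ⋃₀ 𝒜 :=
  fun x hx => ⟨{x}, hx, rfl⟩

end Set

theorem mem_ultrafilterPowersetDelta_map_singleton_iff {X : Type*} {G F : Ultrafilter X} :
    F ∈ ultrafilterPowersetDelta X (Ultrafilter.map (fun x => ({x} : Set X)) G) ↔
      (F : Filter X) ≤ G := by
  constructor
  · intro hF A hA
    have himage : (fun x => ({x} : Set X)) '' A ∈ Ultrafilter.map (fun x => ({x} : Set X)) G :=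
      Ultrafilter.mem_map.2 (Filter.mem_of_superset hA (Set.subset_preimage_image _ _))
    rw [← Set.sUnion_image_singleton A]
    exact hF _ himage
  · intro hle 𝒜 h𝒜
    exact Filter.mem_of_superset (hle h𝒜) (Set.preimage_singleton_subset_sUnion 𝒜)

/-- `δ_X` is compatible with the unit of the power-set monad:
for an ultrafilter `G` on `X`, `δ_X(β(η_X)(G))` consists of exactly the ultrafilters
containing every member of `G`; in particular it equals `{G}`. -/
theorem delta_unit_compatibility {X : Type*} (G : Ultrafilter X) :
    ultrafilterPowersetDelta X (Ultrafilter.map (fun x => ({x} : Set X)) G)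
      = {F : Ultrafilter X | ∀ A ∈ G, A ∈ F} ∧
    ultrafilterPowersetDelta X (Ultrafilter.map (fun x => ({x} : Set X)) G)
      = {G} :=
  ⟨Set.ext fun _ => mem_ultrafilterPowersetDelta_map_singleton_iff,
    Set.ext fun _ => mem_ultrafilterPowersetDelta_map_singleton_iff.trans Ultrafilter.coe_le_coe⟩
end

section
/- Let X be a compact Hausdorff space with ultrafilter-convergence map ξ : βX → X (sending each ultrafilter to its unique limit). For any ultrafilter 𝐅 on PX, the set {ξ(F) : F an ultrafilter on X such that ⋃𝒜 ∈ F for all 𝒜 ∈ 𝐅} equals the intersection over 𝒜 ∈ 𝐅 of the closures of the unions ⋃𝒜. -/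
/-!
The sets `⋃₀ 𝒜`, `𝒜 ∈ 𝐅`, generate a filter `G` on `X`. A point lies in the closure of every
generator iff it is a cluster point of `G`, iff some ultrafilter refining `G` converges to it;
by uniqueness of limits in a Hausdorff space, the ultrafilters converging to `x` are exactly
those with `ξ F = x`.
-/

open Filter Topology

theorem Filter.clusterPt_lift'_sUnion_iff {X : Type*} [TopologicalSpace X] {x : X}
    (FF : Filter (Set X)) :
    ClusterPt x (FF.lift' Set.sUnion) ↔ ∀ 𝒜 ∈ FF, x ∈ closure (⋃₀ 𝒜) :=
  (FF.basis_sets.lift' fun _ _ ↦ Set.sUnion_subset_sUnion).clusterPt_iff_forall_mem_closure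

theorem Ultrafilter.eq_limit_iff_le_nhds {X : Type*} [TopologicalSpace X] [T2Space X]
    {ξ : Ultrafilter X → X} (hξ : ∀ F : Ultrafilter X, (F : Filter X) ≤ 𝓝 (ξ F))
    (F : Ultrafilter X) (x : X) : ξ F = x ↔ (F : Filter X) ≤ 𝓝 x :=
  ⟨fun h ↦ h ▸ hξ F, tendsto_nhds_unique (hξ F)⟩

theorem semialgebra_structure_on_powerset_general {X : Type*}
    [TopologicalSpace X] [T2Space X]
    (ξ : Ultrafilter X → X) (hξ : ∀ F : Ultrafilter X, (F : Filter X) ≤ nhds (ξ F))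
    (FF : Ultrafilter (Set X)) :
    {x : X | ∃ F : Ultrafilter X, (∀ 𝒜 ∈ FF, ⋃₀ 𝒜 ∈ F) ∧ ξ F = x}
      = ⋂ 𝒜 ∈ FF, closure (⋃₀ 𝒜) := by
  ext x
  rw [Set.mem_iInter₂]
  refine Iff.trans ?_ (FF : Filter (Set X)).clusterPt_lift'_sUnion_iff
  simp only [clusterPt_iff_ultrafilter, Set.mem_ofPred_eq, le_lift', Ultrafilter.mem_coe,
    Ultrafilter.eq_limit_iff_le_nhds hξ]

/-- Let `X` be compact Hausdorff with ultrafilter-convergence map `ξ`.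
For any ultrafilter `𝐅` on `PX`, the set of limits `ξ(F)` of ultrafilters `F` on `X`
containing `⋃𝒜` for every `𝒜 ∈ 𝐅` equals `⋂_{𝒜 ∈ 𝐅} closure(⋃𝒜)`. -/
theorem semialgebra_structure_on_powerset {X : Type*}
    [TopologicalSpace X] [CompactSpace X] [T2Space X]
    (ξ : Ultrafilter X → X) (hξ : ∀ F : Ultrafilter X, (F : Filter X) ≤ nhds (ξ F))
    (FF : Ultrafilter (Set X)) :
    {x : X | ∃ F : Ultrafilter X, (∀ 𝒜 ∈ FF, ⋃₀ 𝒜 ∈ F) ∧ ξ F = x}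
      = ⋂ 𝒜 ∈ FF, closure (⋃₀ 𝒜) :=
  semialgebra_structure_on_powerset_general ξ hξ FF
end

section
/- In a continuous lattice L with the Lawson topology, every ultrafilter F converges to the point liminf F = sup{inf A : A ∈ F}, and this limit is unique. -/
/-!
Write `ℓ = liminf F = sup {a | Ici a ∈ F}`; this set is directed since it is closed under `⊔`.
For `s ≪ ℓ`, interpolation `s ≪ t ≪ ℓ` gives some `a` with `t ≤ a` and `Ici a ∈ F`, so the
basic open `s⁺` contains `Ici a ∈ F`. For `s ≰ ℓ` we have `Ici s ∉ F`, so its complement `s⁻`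
lies in the ultrafilter. Conversely, if `F → y`, then every `s ≪ y` satisfies `s⁺ ∈ F`, so
`Ici s ∈ F` and `y = sup {s | s ≪ y} ≤ ℓ`; and if `Ici a ∈ F` with `a ≰ y`, then `a⁻ ∈ F`
would be disjoint from `Ici a`, so `ℓ ≤ y`.
-/

/-- The way-below relation: `s ≪ x` iff for every nonempty directed `D` with `x ≤ sup D`
there is `d ∈ D` with `s ≤ d`. -/
def WayBelow {L : Type*} [CompleteLattice L] (s x : L) : Prop :=
  ∀ D : Set L, D.Nonempty → DirectedOn (· ≤ ·) D → x ≤ sSup D → ∃ d ∈ D, s ≤ d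

/-- The Lawson topology on a complete lattice, generated by the subbasic open sets
`s⁺ = {x | s ≪ x}` and `s⁻ = {x | ¬ s ≤ x}`. -/
def lawsonTopology (L : Type*) [CompleteLattice L] : TopologicalSpace L :=
  TopologicalSpace.generateFrom
    {U : Set L | (∃ s : L, U = {x | WayBelow s x}) ∨ (∃ s : L, U = {x | ¬ s ≤ x})}

open Filter

namespace WayBelow

variable {L : Type*} [CompleteLattice L] {s t x y : L}

theorem le (h : WayBelow s x) : s ≤ x := by
  obtain ⟨d, rfl, hsd⟩ := h {x} (Set.singleton_nonempty x) (directedOn_singleton x)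
    (le_sSup rfl)
  exact hsd

theorem bot (x : L) : WayBelow ⊥ x :=
  fun _ ⟨d, hd⟩ _ _ => ⟨d, hd, bot_le⟩

theorem mono_left (hts : t ≤ s) (h : WayBelow s x) : WayBelow t x :=
  fun D hne hdir hle => (h D hne hdir hle).imp fun _ ⟨hd, hsd⟩ => ⟨hd, hts.trans hsd⟩

theorem mono_right (h : WayBelow s x) (hxy : x ≤ y) : WayBelow s y :=
  fun D hne hdir hle => h D hne hdir (hxy.trans hle)

theorem sup (hs : WayBelow s x) (ht : WayBelow t x) : WayBelow (s ⊔ t) x := by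
  intro D hne hdir hle
  obtain ⟨d₁, hd₁, hsd₁⟩ := hs D hne hdir hle
  obtain ⟨d₂, hd₂, htd₂⟩ := ht D hne hdir hle
  obtain ⟨d, hd, hd₁d, hd₂d⟩ := hdir d₁ hd₁ d₂ hd₂
  exact ⟨d, hd, sup_le (hsd₁.trans hd₁d) (htd₂.trans hd₂d)⟩

/-- Interpolation: `x` is the directed join of all `u ≪ t ≪ x`, and `s ≪ x` picks one of them. -/
theorem exists_wayBelow_wayBelow (hcont : ∀ x : L, x = sSup {s : L | WayBelow s x})
    (h : WayBelow s x) : ∃ t, WayBelow s t ∧ WayBelow t x := by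
  let D : Set L := {u | ∃ t, WayBelow u t ∧ WayBelow t x}
  have hdir : DirectedOn (· ≤ ·) D := by
    rintro u₁ ⟨t₁, hu₁, ht₁⟩ u₂ ⟨t₂, hu₂, ht₂⟩
    exact ⟨u₁ ⊔ u₂, ⟨t₁ ⊔ t₂, (hu₁.mono_right le_sup_left).sup (hu₂.mono_right le_sup_right),
      ht₁.sup ht₂⟩, le_sup_left, le_sup_right⟩
  have hx : x ≤ sSup D := by
    rw [hcont x]
    refine sSup_le fun t ht => ?_
    rw [hcont t]
    exact sSup_le fun u hu => le_sSup ⟨t, hu, ht⟩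
  obtain ⟨d, ⟨t, hdt, htx⟩, hsd⟩ := h D ⟨⊥, ⊥, bot ⊥, bot x⟩ hdir hx
  exact ⟨t, hdt.mono_left hsd, htx⟩

end WayBelow

section Lawson

variable {L : Type*} [CompleteLattice L]

theorem le_nhds_lawson_iff {f : Filter L} {y : L} :
    f ≤ @nhds L (lawsonTopology L) y ↔
      (∀ s, WayBelow s y → {x | WayBelow s x} ∈ f) ∧ (∀ s, ¬ s ≤ y → {x | ¬ s ≤ x} ∈ f) := by
  rw [lawsonTopology, TopologicalSpace.nhds_generateFrom]
  simp only [le_iInf_iff, le_principal_iff, Set.mem_ofPred_eq, and_imp]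
  constructor
  · intro h
    exact ⟨fun s hs => h _ hs (Or.inl ⟨s, rfl⟩), fun s hs => h _ hs (Or.inr ⟨s, rfl⟩)⟩
  · rintro ⟨hplus, hminus⟩ U hyU (⟨s, rfl⟩ | ⟨s, rfl⟩)
    exacts [hplus s hyU, hminus s hyU]

theorem sSup_sInf_image_eq_liminf (f : Filter L) :
    sSup (sInf '' {A : Set L | A ∈ f}) = liminf id f := by
  simp only [liminf_eq_iSup_iInf, sSup_image, sInf_eq_iInf, id, Set.mem_ofPred_eq]

theorem directedOn_setOf_eventually_le (f : Filter L) :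
    DirectedOn (· ≤ ·) {a | ∀ᶠ x in f, a ≤ x} := fun a ha b hb =>
  ⟨a ⊔ b, (ha.and hb).mono fun _ h => sup_le h.1 h.2, le_sup_left, le_sup_right⟩

theorem WayBelow.exists_eventually_le_of_liminf {f : Filter L} {t : L}
    (h : WayBelow t (liminf id f)) : ∃ a, (∀ᶠ x in f, a ≤ x) ∧ t ≤ a := by
  rw [liminf_eq] at h
  exact h _ ⟨⊥, Eventually.of_forall fun _ => bot_le⟩ (directedOn_setOf_eventually_le f) le_rfl

theorem Ultrafilter.le_nhds_lawson_liminf (hcont : ∀ x : L, x = sSup {s : L | WayBelow s x})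
    (F : Ultrafilter L) :
    (F : Filter L) ≤ @nhds L (lawsonTopology L) (liminf id (F : Filter L)) := by
  refine le_nhds_lawson_iff.2 ⟨fun s hs => ?_, fun s hs => ?_⟩
  · obtain ⟨t, hst, ht⟩ := hs.exists_wayBelow_wayBelow hcont
    obtain ⟨a, ha, hta⟩ := ht.exists_eventually_le_of_liminf
    exact ha.mono fun x hax => hst.mono_right (hta.trans hax)
  · refine (F.mem_or_compl_mem {x | s ≤ x}).resolve_left fun hsF => hs ?_
    rw [liminf_eq]
    exact le_sSup hsF

theorem eq_liminf_of_le_nhds_lawson (hcont : ∀ x : L, x = sSup {s : L | WayBelow s x})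
    {f : Filter L} [f.NeBot] {y : L} (hy : f ≤ @nhds L (lawsonTopology L) y) :
    y = liminf id f := by
  obtain ⟨hplus, hminus⟩ := le_nhds_lawson_iff.1 hy
  rw [liminf_eq]
  apply le_antisymm
  · rw [hcont y]
    exact sSup_le_sSup fun s hs => mem_of_superset (hplus s hs) fun _ => WayBelow.le
  · refine sSup_le fun a ha => ?_
    by_contra hay
    obtain ⟨x, hax, hnax⟩ := (ha.and (hminus a hay)).exists
    exact hnax hax

end Lawson

/-- In a continuous lattice `L` with the Lawson topology, every ultrafilter
`F` converges to the point `liminf F = sup{inf A : A ∈ F}`, and this limit is unique. -/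
theorem ultrafilter_converges_to_liminf {L : Type*} [CompleteLattice L]
    (hcont : ∀ x : L, x = sSup {s : L | WayBelow s x}) (F : Ultrafilter L) :
    (F : Filter L) ≤ @nhds L (lawsonTopology L) (sSup (sInf '' {A : Set L | A ∈ F})) ∧
    ∀ y : L, (F : Filter L) ≤ @nhds L (lawsonTopology L) y →
      y = sSup (sInf '' {A : Set L | A ∈ F}) := by
  have hℓ : sSup (sInf '' {A : Set L | A ∈ F}) = liminf id (F : Filter L) :=
    sSup_sInf_image_eq_liminf (F : Filter L)
  rw [hℓ]
  exact ⟨F.le_nhds_lawson_liminf hcont, fun y hy => eq_liminf_of_le_nhds_lawson hcont hy⟩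
end

section
/- Let X be a complete lattice carrying a compact Hausdorff topology such that liminf F = inf(adh F) for every filter F on X, where adh F = ⋂_{A ∈ F} closure(A). Then for every a ∈ X, the principal upset ↑a = {x : a ≤ x} and the principal downset ↓a = {x : x ≤ a} are closed subsets of X. -/
/-!
The hypothesis applied to an ultrafilter `U` converging to `l` gives `liminf U = l`, because the
adherence of `U` is `{l}`. An ultrafilter containing `↑a` has liminf at least `a`, and one
containing `↓a` has liminf at most `a`; so `↑a` and `↓a` are closed under ultrafilter limits.
-/

open Filter Set Topology

theorem Ultrafilter.iInter_closure_eq_singleton {X : Type*} [TopologicalSpace X] [T2Space X]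
    {U : Ultrafilter X} {l : X} (hl : ↑U ≤ 𝓝 l) :
    ⋂ A ∈ (U : Filter X), closure A = {l} := by
  ext x
  rw [mem_iInter₂, ← clusterPt_iff_forall_mem_closure, Ultrafilter.clusterPt_iff,
    mem_singleton_iff]
  exact ⟨fun hx => tendsto_nhds_unique (f := id) hx hl, fun hx => hx ▸ hl⟩

section CompleteLattice

variable {X : Type*} [CompleteLattice X] {F : Filter X} {a : X}

theorem le_sSup_sInf_image_sets (ha : Ici a ∈ F) : a ≤ sSup (sInf '' F.sets) :=
  le_sSup_of_le ⟨Ici a, ha, rfl⟩ (le_sInf fun _ hx => hx)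

theorem sSup_sInf_image_sets_le [F.NeBot] (ha : Iic a ∈ F) : sSup (sInf '' F.sets) ≤ a := by
  refine sSup_le ?_
  rintro _ ⟨A, hA, rfl⟩
  obtain ⟨y, hyA, hya⟩ := F.nonempty_of_mem (inter_mem hA ha)
  exact (sInf_le hyA).trans hya

end CompleteLattice

theorem principal_sets_closed_general {X : Type*} [CompleteLattice X]
    [TopologicalSpace X] [T2Space X]
    (h : ∀ F : Filter X, F.NeBot →
      sSup (sInf '' F.sets) = sInf (⋂ A ∈ F, closure A)) :
    ∀ a : X, IsClosed {x : X | a ≤ x} ∧ IsClosed {x : X | x ≤ a} := by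
  have liminf_eq_lim : ∀ (U : Ultrafilter X) (l : X), ↑U ≤ 𝓝 l →
      sSup (sInf '' (U : Filter X).sets) = l := fun U l hl => by
    rw [h U U.neBot, U.iInter_closure_eq_singleton hl, sInf_singleton]
  intro a
  refine ⟨isClosed_iff_ultrafilter.2 fun l U hl ha => ?_,
    isClosed_iff_ultrafilter.2 fun l U hl ha => ?_⟩
  · exact liminf_eq_lim U l hl ▸ le_sSup_sInf_image_sets ha
  · exact liminf_eq_lim U l hl ▸ sSup_sInf_image_sets_le ha

/-- Let `X` be a complete lattice carrying a compact Hausdorff topology such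
that `liminf F = inf (adh F)` for every (proper) filter `F` on `X`, where
`adh F = ⋂_{A ∈ F} closure A` and `liminf F = sup {inf A : A ∈ F}`. Then every principal
upset `↑a` and every principal downset `↓a` is closed. -/
theorem principal_sets_closed {X : Type*} [CompleteLattice X]
    [TopologicalSpace X] [CompactSpace X] [T2Space X]
    (h : ∀ F : Filter X, F.NeBot →
      sSup (sInf '' F.sets) = sInf (⋂ A ∈ F, closure A)) :
    ∀ a : X, IsClosed {x : X | a ≤ x} ∧ IsClosed {x : X | x ≤ a} :=
  principal_sets_closed_general h
end

section
/- Let X be a complete lattice and a compact Hausdorff space in which all principal upsets ↑a are closed. If U ⊆ X is open and up-closed and x ∈ U, then inf U ≪ x (inf U is way below x). -/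
open Set

theorem exists_mem_upperBounds_of_isClosed {X : Type*} [Preorder X] [TopologicalSpace X]
    [CompactSpace X] (hIci : ∀ a : X, IsClosed (Ici a)) {C : Set X} (hC : IsClosed C)
    {D : Set X} (hD : D.Nonempty) (hDdir : DirectedOn (· ≤ ·) D)
    (hmeet : ∀ d ∈ D, (Ici d ∩ C).Nonempty) : ∃ y ∈ C, y ∈ upperBounds D := by
  have : Nonempty D := hD.to_subtype
  let t : D → Set X := fun d => Ici (d : X) ∩ C
  have htd : Directed (· ⊇ ·) t := fun a b => by
    obtain ⟨c, hc, hac, hbc⟩ := hDdir a a.2 b b.2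
    exact ⟨⟨c, hc⟩, inter_subset_inter_left _ (Ici_subset_Ici.2 hac),
      inter_subset_inter_left _ (Ici_subset_Ici.2 hbc)⟩
  have htcl : ∀ d, IsClosed (t d) := fun d => (hIci d).inter hC
  obtain ⟨y, hy⟩ := IsCompact.nonempty_iInter_of_directed_nonempty_isCompact_isClosed t
    htd (fun d => hmeet d d.2) (fun d => (htcl d).isCompact) htcl
  rw [mem_iInter] at hy
  exact ⟨y, (hy ⟨hD.some, hD.some_mem⟩).2, fun d hd => (hy ⟨d, hd⟩).1⟩

theorem inf_of_open_upperset_wayBelow_general {X : Type*} [CompleteLattice X]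
    [TopologicalSpace X] [CompactSpace X]
    (hups : ∀ a : X, IsClosed {x : X | a ≤ x})
    (U : Set X) (hU : IsOpen U) (hupc : ∀ x ∈ U, ∀ y, x ≤ y → y ∈ U)
    (x : X) (hx : x ∈ U) :
    WayBelow (sInf U) x := by
  intro D hD hDdir hxD
  by_contra! hDU
  have hD_out : ∀ d ∈ D, d ∉ U := fun d hd hdU => hDU d hd (sInf_le hdU)
  obtain ⟨y, hyU, hyD⟩ := exists_mem_upperBounds_of_isClosed hups hU.isClosed_compl hD hDdir
    fun d hd => ⟨d, le_rfl, hD_out d hd⟩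
  exact hyU (hupc x hx y (hxD.trans (sSup_le hyD)))

/-- Let `X` be a complete lattice and a compact Hausdorff space in which all
principal upsets `↑a` are closed. If `U ⊆ X` is open and up-closed and `x ∈ U`, then
`inf U ≪ x`. -/
theorem inf_of_open_upperset_wayBelow {X : Type*} [CompleteLattice X]
    [TopologicalSpace X] [CompactSpace X] [T2Space X]
    (hups : ∀ a : X, IsClosed {x : X | a ≤ x})
    (U : Set X) (hU : IsOpen U) (hupc : ∀ x ∈ U, ∀ y, x ≤ y → y ∈ U)
    (x : X) (hx : x ∈ U) :
    WayBelow (sInf U) x :=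
  inf_of_open_upperset_wayBelow_general hups U hU hupc x hx
end

section
/- Let X be a complete lattice with a compact Hausdorff topology such that liminf F = inf(adh F) for every filter F on X. Then X is a continuous lattice: x = sup{s : s ≪ x} for every x ∈ X. -/
/-!
Compactness together with the hypothesis makes the tail filter of every directed set converge
to its supremum: an ultrafilter refining it converges to its own liminf, and that liminf is the
supremum of the set. Applying the hypothesis to the tail filter of `D` joined with `pure x`,
whose cluster points are `sSup D` and `x`, gives meet continuity `sSup ((x ⊓ ·) '' D) = x`
for `x ≤ sSup D`. Hence the tails of the directed set `(x ⊓ ·) '' D` eventually enter every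
neighbourhood `A` of `x`, so `sInf A ≪ x`; and `x`, the liminf of its neighbourhood filter,
is the supremum of these `sInf A`.
-/

open Filter Set Topology

theorem WayBelow.le_s15 {L : Type*} [CompleteLattice L] {s x : L} (h : WayBelow s x) : s ≤ x := by
  obtain ⟨d, rfl, hsd⟩ := h {x} (singleton_nonempty x) (directedOn_singleton x) (le_sSup rfl)
  exact hsd

section TailFilter

variable {α : Type*} [Preorder α] {D : Set α}

def tailFilter (D : Set α) : Filter α := ⨅ d ∈ D, 𝓟 (D ∩ Ici d)

theorem tail_mem_tailFilter {d : α} (hd : d ∈ D) : D ∩ Ici d ∈ tailFilter D :=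
  mem_iInf_of_mem d (mem_iInf_of_mem hd (mem_principal_self _))

theorem mem_tailFilter (hne : D.Nonempty) (hdir : DirectedOn (· ≤ ·) D) {A : Set α} :
    A ∈ tailFilter D ↔ ∃ d ∈ D, D ∩ Ici d ⊆ A := by
  have htails : DirectedOn ((fun d ↦ 𝓟 (D ∩ Ici d)) ⁻¹'o (· ≥ ·)) D := by
    exact hdir.mono' fun a _ b _ hab ↦ principal_mono.2 fun e he ↦ ⟨he.1, hab.trans he.2⟩
  simp only [tailFilter, mem_biInf_of_directed htails hne, mem_principal]

theorem tailFilter_neBot (hne : D.Nonempty) (hdir : DirectedOn (· ≤ ·) D) :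
    (tailFilter D).NeBot := by
  refine forall_mem_nonempty_iff_neBot.1 fun A hA ↦ ?_
  obtain ⟨d, hd, hsub⟩ := (mem_tailFilter hne hdir).1 hA
  exact ⟨d, hsub ⟨hd, le_rfl⟩⟩

end TailFilter

section Liminf

variable {L : Type*} [CompleteLattice L] {D : Set L}

theorem sInf_inter_Ici {d : L} (hd : d ∈ D) : sInf (D ∩ Ici d) = d :=
  le_antisymm (sInf_le ⟨hd, le_rfl⟩) (le_sInf fun _ he ↦ he.2)

theorem liminf_eq_sSup_of_le_tailFilter (hne : D.Nonempty) {F : Filter L} [F.NeBot]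
    (hF : F ≤ tailFilter D) : sSup (sInf '' F.sets) = sSup D := by
  apply le_antisymm
  · refine sSup_le ?_
    rintro _ ⟨A, hA, rfl⟩
    obtain ⟨d₀, hd₀⟩ := hne
    obtain ⟨e, heA, heD, -⟩ :=
      Filter.nonempty_of_mem (inter_mem hA (hF (tail_mem_tailFilter hd₀)))
    exact (sInf_le heA).trans (le_sSup heD)
  · refine sSup_le fun d hd ↦ ?_
    calc d = sInf (D ∩ Ici d) := (sInf_inter_Ici hd).symm
      _ ≤ sSup (sInf '' F.sets) := le_sSup ⟨_, hF (tail_mem_tailFilter hd), rfl⟩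

theorem liminf_tailFilter_sup_pure (hne : D.Nonempty) (hdir : DirectedOn (· ≤ ·) D) (x : L) :
    sSup (sInf '' (tailFilter D ⊔ pure x).sets) = sSup ((x ⊓ ·) '' D) := by
  apply le_antisymm
  · refine sSup_le ?_
    rintro _ ⟨A, hA, rfl⟩
    obtain ⟨hAtail, hxA⟩ := mem_sup.1 hA
    obtain ⟨d, hd, hsub⟩ := (mem_tailFilter hne hdir).1 hAtail
    have hdA : d ∈ A := hsub ⟨hd, le_rfl⟩
    exact (le_inf (sInf_le (mem_pure.1 hxA)) (sInf_le hdA)).trans (le_sSup ⟨d, hd, rfl⟩)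
  · refine sSup_le ?_
    rintro _ ⟨d, hd, rfl⟩
    have hmem : insert x (D ∩ Ici d) ∈ tailFilter D ⊔ pure x :=
      mem_sup.2 ⟨mem_of_superset (tail_mem_tailFilter hd) (subset_insert _ _), mem_insert x _⟩
    calc x ⊓ d = sInf (insert x (D ∩ Ici d)) := by rw [sInf_insert, sInf_inter_Ici hd]
      _ ≤ sSup (sInf '' (tailFilter D ⊔ pure x).sets) := le_sSup ⟨_, hmem, rfl⟩

end Liminf

section ClusterPt

variable {X : Type*} [TopologicalSpace X]

theorem biInter_closure_eq_setOf_clusterPt (F : Filter X) :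
    ⋂ A ∈ F, closure A = {z | ClusterPt z F} := by
  ext z
  simp only [mem_iInter, mem_ofPred_eq, clusterPt_iff_forall_mem_closure]

theorem ClusterPt.eq_of_le_nhds [T2Space X] {F : Filter X} {y z : X} (hz : ClusterPt z F)
    (hF : F ≤ 𝓝 y) : z = y :=
  eq_of_nhds_neBot (hz.neBot.mono (inf_le_inf_left _ hF))

theorem setOf_clusterPt_eq_singleton [T2Space X] {F : Filter X} [F.NeBot] {y : X}
    (hF : F ≤ 𝓝 y) : {z | ClusterPt z F} = {y} :=
  Subset.antisymm (fun _ hz ↦ hz.eq_of_le_nhds hF) (singleton_subset_iff.2 (.of_le_nhds hF))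

end ClusterPt

def LiminfEqInfClusterPt (X : Type*) [CompleteLattice X] [TopologicalSpace X] : Prop :=
  ∀ F : Filter X, F.NeBot → sSup (sInf '' F.sets) = sInf {z | ClusterPt z F}

namespace LiminfEqInfClusterPt

variable {X : Type*} [CompleteLattice X] [TopologicalSpace X] [T2Space X]
  (hX : LiminfEqInfClusterPt X)
include hX

theorem liminf_eq_of_le_nhds {F : Filter X} [F.NeBot] {y : X} (hF : F ≤ 𝓝 y) :
    sSup (sInf '' F.sets) = y := by
  rw [hX F ‹_›, setOf_clusterPt_eq_singleton hF, sInf_singleton]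

theorem tailFilter_le_nhds_sSup [CompactSpace X] {D : Set X} (hne : D.Nonempty) :
    tailFilter D ≤ 𝓝 (sSup D) := by
  refine le_iff_ultrafilter.2 fun U hU ↦ ?_
  have hlim : sSup (sInf '' (U : Filter X).sets) = U.lim := hX.liminf_eq_of_le_nhds U.le_nhds_lim
  rw [← liminf_eq_sSup_of_le_tailFilter hne hU, hlim]
  exact U.le_nhds_lim

theorem sSup_inf_eq_of_le_sSup [CompactSpace X] {D : Set X} (hne : D.Nonempty)
    (hdir : DirectedOn (· ≤ ·) D) {x : X} (hx : x ≤ sSup D) : sSup ((x ⊓ ·) '' D) = x := by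
  have := tailFilter_neBot hne hdir
  have hcluster : {z | ClusterPt z (tailFilter D ⊔ pure x)} = {sSup D, x} := by
    simp only [clusterPt_sup, ofPred_or, setOf_clusterPt_eq_singleton (pure_le_nhds x),
      setOf_clusterPt_eq_singleton (hX.tailFilter_le_nhds_sSup hne), singleton_union]
  rw [← liminf_tailFilter_sup_pure hne hdir, hX _ inferInstance, hcluster, sInf_pair,
    inf_eq_right.2 hx]

theorem wayBelow_sInf_of_mem_nhds [CompactSpace X] {x : X} {A : Set X} (hA : A ∈ 𝓝 x) :
    WayBelow (sInf A) x := by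
  intro D hne hdir hx
  have hdir' : DirectedOn (· ≤ ·) ((x ⊓ ·) '' D) :=
    hdir.mono_comp fun _ _ ↦ inf_le_inf_left x
  have hconv : tailFilter ((x ⊓ ·) '' D) ≤ 𝓝 x := by
    simpa only [hX.sSup_inf_eq_of_le_sSup hne hdir hx] using
      hX.tailFilter_le_nhds_sSup (hne.image (x ⊓ ·))
  obtain ⟨_, ⟨d, hd, rfl⟩, hsub⟩ := (mem_tailFilter (hne.image _) hdir').1 (hconv hA)
  exact ⟨d, hd, (sInf_le (hsub ⟨⟨d, hd, rfl⟩, le_rfl⟩)).trans inf_le_right⟩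

end LiminfEqInfClusterPt

/-- Let `X` be a complete lattice with a compact Hausdorff topology such that
`liminf F = inf (adh F)` for every (proper) filter `F` on `X`. Then `X` is a continuous
lattice: `x = sup {s : s ≪ x}` for every `x`. -/
theorem continuous_lattice_of_liminf_eq_inf_adh {X : Type*} [CompleteLattice X]
    [TopologicalSpace X] [CompactSpace X] [T2Space X]
    (h : ∀ F : Filter X, F.NeBot →
      sSup (sInf '' F.sets) = sInf (⋂ A ∈ F, closure A)) :
    ∀ x : X, x = sSup {s : X | WayBelow s x} := by
  have hX : LiminfEqInfClusterPt X := fun F hF ↦ by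
    rw [h F hF, biInter_closure_eq_setOf_clusterPt]
  intro x
  refine le_antisymm ?_ (sSup_le fun s hs ↦ hs.le_s15)
  calc x = sSup (sInf '' (𝓝 x).sets) := (hX.liminf_eq_of_le_nhds le_rfl).symm
    _ ≤ sSup {s : X | WayBelow s x} := sSup_le_sSup fun _ ⟨_, hA, hs⟩ ↦
        hs ▸ hX.wayBelow_sInf_of_mem_nhds hA
end

section
/- For a compact Hausdorff space X and closed subsets C ⊆ X, the Vietoris topology on the set VX of closed subsets of X — generated by the sets C⁺ = {A closed : A ∩ C = ∅} and C⁻ = {A closed : A ⊄ C} for C closed — coincides with the Lawson topology on the continuous lattice (VX, ⊇) of closed subsets ordered by reverse inclusion. -/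
open TopologicalSpace

/-- The Vietoris topology on the closed subsets of a space, generated by the subbasic open
sets `C⁺ = {A : A ∩ C = ∅}` and `C⁻ = {A : A ⊄ C}` for `C` closed. -/
def vietorisTopology (X : Type*) [TopologicalSpace X] : TopologicalSpace (Closeds X) :=
  TopologicalSpace.generateFrom
    {U : Set (Closeds X) |
      (∃ C : Closeds X, U = {A : Closeds X | (A : Set X) ∩ (C : Set X) = ∅}) ∨
      (∃ C : Closeds X, U = {A : Closeds X | ¬ (A : Set X) ⊆ (C : Set X)})}

/-! In `(Closeds X)ᵒᵈ` one has `s ≪ x` exactly when `x ⊆ interior s`: compactness turns a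
directed intersection lying inside the open set `interior s` into a single member inside it, and
regularity writes `x` as the intersection of its closed neighbourhoods. Hence the Lawson set `s⁺`
is the Vietoris set `(interior s)ᶜ⁺`, and by normality the Vietoris set `C⁺` is the union of the
Lawson sets `s⁺` over closed `s` disjoint from `C`; the sets `s⁻` and `C⁻` coincide. -/

open Set OrderDual Topology

namespace TopologicalSpace.Closeds

variable {X : Type*} [TopologicalSpace X]

theorem exists_subset_interior_notMem [RegularSpace X] (x : Closeds X) {p : X}
    (hp : p ∉ (x : Set X)) :
    ∃ c : Closeds X, (x : Set X) ⊆ interior c ∧ p ∉ (c : Set X) := by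
  obtain ⟨t, ht, htc, htx⟩ :=
    exists_mem_nhds_isClosed_subset (x.isClosed.isOpen_compl.mem_nhds hp)
  refine ⟨⟨(interior t)ᶜ, isOpen_interior.isClosed_compl⟩, ?_,
    not_not.mpr (mem_interior_iff_mem_nhds.mpr ht)⟩
  exact (subset_compl_comm.mp htx).trans <|
    htc.isOpen_compl.subset_interior_iff.mpr (compl_subset_compl.mpr interior_subset)

theorem sInf_setOf_subset_interior [RegularSpace X] (x : Closeds X) :
    sInf {c : Closeds X | (x : Set X) ⊆ interior c} = x := by
  refine le_antisymm (fun p hp ↦ ?_)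
    (le_sInf fun c hc ↦ SetLike.coe_subset_coe.mp (hc.trans interior_subset))
  by_contra hpx
  obtain ⟨c, hxc, hpc⟩ := exists_subset_interior_notMem x hpx
  exact hpc ((sInf_le hxc : sInf _ ≤ c) hp)

theorem subset_interior_of_wayBelow_toDual [RegularSpace X] {s x : Closeds X}
    (h : WayBelow (toDual s) (toDual x)) : (x : Set X) ⊆ interior s := by
  set N : Set (Closeds X) := {c | (x : Set X) ⊆ interior c}
  have hN : DirectedOn (· ≥ ·) N := fun c₁ h₁ c₂ h₂ ↦
    ⟨c₁ ⊓ c₂, by simpa [N, interior_inter] using And.intro h₁ h₂, inf_le_left, inf_le_right⟩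
  obtain ⟨d, hd, hds⟩ :=
    h (ofDual ⁻¹' N) ⟨toDual ⊤, by simp [N]⟩ hN (sInf_setOf_subset_interior x).le
  exact hd.trans (interior_mono (SetLike.coe_subset_coe.mpr hds))

theorem wayBelow_toDual_of_subset_interior [CompactSpace X] {s x : Closeds X}
    (h : (x : Set X) ⊆ interior s) : WayBelow (toDual s) (toDual x) := by
  rintro D ⟨d₀, hd₀⟩ hD hx
  have : Nonempty D := ⟨⟨d₀, hd₀⟩⟩
  have hV : Directed (· ⊇ ·) fun d : D ↦ ((ofDual d.1 : Closeds X) : Set X) :=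
    hD.directed_val.mono_comp _ fun _ _ h ↦ SetLike.coe_subset_coe.mpr h
  have hx' : sInf (toDual ⁻¹' D) ≤ x := hx
  have hVx : (⋂ d : D, ((ofDual d.1 : Closeds X) : Set X)) ⊆ x := fun p hp ↦ by
    refine hx' ?_
    rw [← SetLike.mem_coe, coe_sInf, mem_iInter₂]
    exact fun c hc ↦ mem_iInter.mp hp ⟨toDual c, hc⟩
  obtain ⟨⟨d, hd⟩, hds⟩ := exists_subset_nhds_of_isCompact' hV
    (fun d ↦ (ofDual d.1).isClosed.isCompact) (fun d ↦ (ofDual d.1).isClosed)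
    fun p hp ↦ isOpen_interior.mem_nhds (h (hVx hp))
  exact ⟨d, hd, (SetLike.coe_subset_coe.mp (hds.trans interior_subset) : ofDual d ≤ s)⟩

theorem wayBelow_toDual_iff [CompactSpace X] [RegularSpace X] {s x : Closeds X} :
    WayBelow (toDual s) (toDual x) ↔ (x : Set X) ⊆ interior s :=
  ⟨subset_interior_of_wayBelow_toDual, wayBelow_toDual_of_subset_interior⟩

theorem isOpen_vietoris_setOf_wayBelow_toDual [CompactSpace X] [RegularSpace X] (s : Closeds X) :
    IsOpen[vietorisTopology X] {A : Closeds X | WayBelow (toDual s) (toDual A)} := by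
  have hs : {A : Closeds X | WayBelow (toDual s) (toDual A)} =
      {A : Closeds X | (A : Set X) ∩ (interior s)ᶜ = ∅} := by
    ext A
    exact wayBelow_toDual_iff.trans sdiff_eq_empty.symm
  rw [hs]
  exact isOpen_generateFrom_of_mem
    (Or.inl ⟨⟨(interior s)ᶜ, isOpen_interior.isClosed_compl⟩, rfl⟩)

theorem isOpen_lawson_setOf_inter_eq_empty [CompactSpace X] [RegularSpace X] (C : Closeds X) :
    IsOpen[lawsonTopology (Closeds X)ᵒᵈ]
      {A : (Closeds X)ᵒᵈ | ((ofDual A : Closeds X) : Set X) ∩ C = ∅} := by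
  let _ : TopologicalSpace (Closeds X)ᵒᵈ := lawsonTopology _
  have hC : {A : (Closeds X)ᵒᵈ | ((ofDual A : Closeds X) : Set X) ∩ C = ∅} =
      ⋃ (s : Closeds X) (_ : Disjoint (s : Set X) C), {x | WayBelow (toDual s) x} := by
    ext A
    simp only [mem_iUnion, ← disjoint_iff_inter_eq_empty, exists_prop]
    constructor
    · intro hAC
      obtain ⟨u, hu, hAu, huC⟩ := normal_exists_closure_subset (ofDual A).isClosed
        C.isClosed.isOpen_compl hAC.subset_compl_right
      exact ⟨⟨closure u, isClosed_closure⟩, disjoint_compl_left.mono_left huC,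
        wayBelow_toDual_iff.mpr (hAu.trans hu.subset_interior_closure)⟩
    · rintro ⟨s, hsC, hAs⟩
      exact hsC.mono_left ((wayBelow_toDual_iff.mp hAs).trans interior_subset)
  rw [hC]
  exact isOpen_iUnion fun s ↦ isOpen_iUnion fun _ ↦
    isOpen_generateFrom_of_mem (Or.inl ⟨toDual s, rfl⟩)

end TopologicalSpace.Closeds

/-- For a compact Hausdorff space `X`, the Vietoris topology on the set `VX`
of closed subsets of `X` coincides with the Lawson topology on the continuous lattice
`(VX, ⊇)` of closed subsets ordered by reverse inclusion. -/
theorem vietoris_eq_lawson (X : Type*) [TopologicalSpace X] [CompactSpace X] [T2Space X] :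
    vietorisTopology X = (lawsonTopology (Closeds X)ᵒᵈ : TopologicalSpace (Closeds X)ᵒᵈ) := by
  refine le_antisymm (le_generateFrom ?_) (le_generateFrom ?_)
  · rintro U (⟨s, rfl⟩ | ⟨s, rfl⟩)
    · exact Closeds.isOpen_vietoris_setOf_wayBelow_toDual (ofDual s)
    · exact isOpen_generateFrom_of_mem (Or.inr ⟨ofDual s, rfl⟩)
  · rintro U (⟨C, rfl⟩ | ⟨C, rfl⟩)
    · exact Closeds.isOpen_lawson_setOf_inter_eq_empty C
    · exact isOpen_generateFrom_of_mem (Or.inr ⟨toDual C, rfl⟩)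
end

section
/- For a compact Hausdorff space X, the set VX of closed subsets with operations: unit x ↦ {x}, functorial action by direct image (which preserves closedness since continuous images of compact sets are compact), and multiplication sending a closed family 𝒜 ∈ VVX to the union ⋃𝒜, satisfies the monad laws: the union of a closed (in the Vietoris topology) family of closed sets is closed, unit laws μ ∘ η_V = id and μ ∘ Vη = id hold, and μ is associative. -/
/-
Apart from the closedness of `⋃ 𝒜`, the laws are set identities or standard compactness facts.
Given `x` in the closure of `⋃ 𝒜`, take an ultrafilter `u → x` on `⋃ 𝒜` and push it to `VX` along
a choice `y ↦ A_y ∈ 𝒜` with `y ∈ A_y`. Over a compact space, every ultrafilter `F` on `VX`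
converges to the set of points none of whose neighbourhoods `F`-almost every member misses. For
the pushed-forward ultrafilter this limit contains `x`, and it lies in `𝒜` because `𝒜` is closed.
-/

open TopologicalSpace

universe u v

open Topology Filter

namespace Vietoris

variable {X : Type*} [TopologicalSpace X]

local instance : TopologicalSpace (Closeds X) := vietorisTopology X

def ultrafilterLimit (F : Ultrafilter (Closeds X)) : Closeds X where
  carrier := (⋃₀ {U : Set X | IsOpen U ∧ {A : Closeds X | Disjoint (A : Set X) U} ∈ F})ᶜ
  isClosed' := (isOpen_sUnion fun _ hU => hU.1).isClosed_compl

lemma setOf_not_disjoint_mem_of_mem_ultrafilterLimit {F : Ultrafilter (Closeds X)} {x : X}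
    (hx : x ∈ (ultrafilterLimit F : Set X)) {U : Set X} (hU : IsOpen U) (hxU : x ∈ U) :
    {A : Closeds X | ¬ Disjoint (A : Set X) U} ∈ F :=
  Ultrafilter.compl_mem_iff_notMem.mpr fun hF => hx ⟨U, ⟨hU, hF⟩, hxU⟩

lemma ultrafilter_le_nhds_ultrafilterLimit [CompactSpace X] (F : Ultrafilter (Closeds X)) :
    (F : Filter (Closeds X)) ≤ 𝓝 (ultrafilterLimit F) := by
  refine (TopologicalSpace.tendsto_nhds_generateFrom_iff (m := id)).mpr fun s hs hLs => ?_
  rcases hs with ⟨C, rfl⟩ | ⟨C, rfl⟩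
  · -- `C` is compact and covered by open sets that `F`-almost every `A` misses
    have hcover : (C : Set X) ⊆ ⋃₀ {U : Set X | IsOpen U ∧
        {A : Closeds X | Disjoint (A : Set X) U} ∈ F} := fun x hxC => by
      by_contra hx
      exact Set.eq_empty_iff_forall_notMem.mp hLs x ⟨hx, hxC⟩
    rw [Set.sUnion_eq_biUnion] at hcover
    obtain ⟨t, hts, htfin, hCt⟩ :=
      C.isClosed.isCompact.elim_finite_subcover_image (c := fun U => U) (fun U hU => hU.1) hcover
    have hdisj : (⋂ U ∈ t, {A : Closeds X | Disjoint (A : Set X) U}) ∈ F :=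
      (biInter_mem htfin).mpr fun U hU => (hts hU).2
    refine F.mem_of_superset hdisj fun A hA => ?_
    simp only [Set.mem_iInter, Set.mem_ofPred_eq] at hA
    exact Set.disjoint_iff_inter_eq_empty.mp
      (Disjoint.mono_right hCt (Set.disjoint_iUnion₂_right.mpr hA))
  · obtain ⟨x, hxL, hxC⟩ := Set.not_subset.mp hLs
    refine F.mem_of_superset
      (setOf_not_disjoint_mem_of_mem_ultrafilterLimit hxL C.isClosed.isOpen_compl hxC) fun A hA => ?_
    simpa [Set.disjoint_compl_right_iff_subset] using hA

lemma isClosed_biUnion_of_isClosed [CompactSpace X] {𝒜 : Set (Closeds X)} (h𝒜 : IsClosed 𝒜) :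
    IsClosed (⋃ A ∈ 𝒜, (A : Set X)) := by
  refine isClosed_iff_ultrafilter.mpr fun x u hux hu => ?_
  have : ∀ y ∈ ⋃ A ∈ 𝒜, (A : Set X), ∃ A ∈ 𝒜, y ∈ (A : Set X) := by simp
  choose! g hg𝒜 hgy using this
  have hL𝒜 : ultrafilterLimit (u.map g) ∈ 𝒜 :=
    isClosed_iff_ultrafilter.mp h𝒜 _ _ (ultrafilter_le_nhds_ultrafilterLimit _)
      (Ultrafilter.mem_map.mpr (mem_of_superset hu hg𝒜))
  refine Set.mem_biUnion hL𝒜 ?_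
  rintro ⟨U, ⟨hU, hF⟩, hxU⟩
  obtain ⟨y, ⟨hyU, hy𝒜⟩, hyg⟩ :=
    u.nonempty_of_mem (inter_mem (inter_mem (hux (hU.mem_nhds hxU)) hu) hF)
  exact Set.disjoint_left.mp hyg (hgy y hy𝒜) hyU

end Vietoris

/-- For a compact Hausdorff space `X`, the Vietoris construction on `VX`
(unit `x ↦ {x}`, action on maps by direct image, multiplication `𝒜 ↦ ⋃𝒜`) satisfies the
monad laws: the union of a Vietoris-closed family of closed sets is closed; direct images
of closed sets under continuous maps of compact Hausdorff spaces are closed; the unit laws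
`μ ∘ η_V = id` and `μ ∘ Vη = id` hold; and `μ` is associative. -/
theorem vietoris_monad_laws (X : Type u) [TopologicalSpace X] [CompactSpace X] [T2Space X] :
    -- the union of a Vietoris-closed family of closed sets is closed
    (∀ 𝒜 : Set (Closeds X), @IsClosed _ (vietorisTopology X) 𝒜 →
      IsClosed (⋃ A ∈ 𝒜, (A : Set X))) ∧
    -- direct images preserve closedness (functorial action is well defined)
    (∀ (Y : Type v) (_ : TopologicalSpace Y), CompactSpace Y → T2Space Y →
      ∀ f : X → Y, Continuous f → ∀ A : Closeds X, IsClosed (f '' (A : Set X))) ∧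
    -- μ ∘ η_V = id : the union of the singleton family {A} is A
    (∀ A : Closeds X, (⋃ B ∈ ({A} : Set (Closeds X)), (B : Set X)) = (A : Set X)) ∧
    -- μ ∘ Vη = id : the union of the family of singletons of points of A is A
    (∀ A : Closeds X,
      (⋃ B ∈ {B : Closeds X | ∃ x ∈ (A : Set X), (B : Set X) = {x}}, (B : Set X))
        = (A : Set X)) ∧
    -- associativity of μ
    (∀ 𝔄 : Set (Set (Closeds X)),
      (⋃ 𝒜 ∈ 𝔄, ⋃ A ∈ 𝒜, (A : Set X)) = ⋃ A ∈ ⋃₀ 𝔄, (A : Set X)) := by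
  refine ⟨fun 𝒜 h𝒜 => Vietoris.isClosed_biUnion_of_isClosed h𝒜,
    fun Y _ _ _ f hf A => (A.isClosed.isCompact.image hf).isClosed,
    fun A => by simp, fun A => ?_, fun 𝔄 => ?_⟩
  · ext y
    simp only [Set.mem_iUnion, Set.mem_ofPred_eq]
    constructor
    · rintro ⟨B, ⟨z, hz, hB⟩, hyB⟩
      rw [hB, Set.mem_singleton_iff] at hyB
      exact hyB ▸ hz
    · exact fun hy => ⟨⟨{y}, isClosed_singleton⟩, ⟨y, hy, rfl⟩, rfl⟩
  · exact (iSup_sUnion 𝔄 _).symm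
end

section
/- The weak distributive law δ : βP ⇒ Pβ with δ_X(𝐅) = {F ∈ βX : ⋃𝒜 ∈ F for all 𝒜 ∈ 𝐅} satisfies the multiplicativity axiom with respect to the ultrafilter monad: δ_X ∘ μ^β_{PX} = P(μ^β_X) ∘ δ_{βX} ∘ β(δ_X) as maps ββPX → PβX. -/
/-- The multiplication of the ultrafilter monad. -/
def ultrafilterJoin {α : Type*} (G : Ultrafilter (Ultrafilter α)) : Ultrafilter α :=
  G.bind id

/-!
For `F ∈ δ_X(μ 𝐆)` we look for `𝐇 ∈ δ_{βX}(β δ_X 𝐆)` with `μ 𝐇 = F`. Both conditions are lower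
bounds on `𝐇`: the first says that `𝐇` refines the filter of those `S ⊆ βX` with `δ_X 𝐅 ⊆ S` for
`𝐆`-almost all `𝐅`, the second that `𝐇` converges to `F` in the Stone topology. Such an `𝐇` exists
once every such `S` meets every basic neighbourhood `A^#`, `A ∈ F`. It does: `A` meets
`𝐆`-almost every `⋃𝒜`, and an ultrafilter `𝐅` on `PX` has a point of `δ_X 𝐅` in `A^#` exactly when
`𝐅`-almost every set meets `A`.
-/

open Set Filter Topology

section

variable {α : Type*}

/-- `(𝔉 : Filter (Set α)).bind 𝓟` is the filter `{s | 𝒫 s ∈ 𝔉}`. -/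
theorem mem_ultrafilterPowersetDelta_iff {𝔉 : Ultrafilter (Set α)} {u : Ultrafilter α} :
    u ∈ ultrafilterPowersetDelta α 𝔉 ↔ ↑u ≤ (𝔉 : Filter (Set α)).bind 𝓟 := by
  constructor
  · intro hu s hs
    exact mem_of_superset (hu _ (mem_bind'.1 hs)) (sUnion_subset fun _ ht => ht)
  · intro h 𝒜 h𝒜
    exact h (mem_bind'.2 (mem_of_superset h𝒜 fun _ => subset_sUnion_of_mem))

theorem exists_mem_ultrafilterPowersetDelta_iff {𝔉 : Ultrafilter (Set α)} {A : Set α} :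
    (∃ u ∈ ultrafilterPowersetDelta α 𝔉, A ∈ u) ↔ {B | (B ∩ A).Nonempty} ∈ 𝔉 := by
  constructor
  · rintro ⟨u, hu, hA⟩
    by_contra h
    obtain ⟨x, ⟨B, hB, hxB⟩, hxA⟩ :=
      Ultrafilter.nonempty_of_mem (inter_mem (hu _ (Ultrafilter.compl_mem_iff_notMem.2 h)) hA)
    exact hB ⟨x, hxB, hxA⟩
  · intro h
    have : ((𝔉 : Filter (Set α)).bind 𝓟 ⊓ 𝓟 A).NeBot := by
      refine inf_principal_neBot_iff.2 fun s hs => ?_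
      obtain ⟨B, hBs, hBA⟩ := Ultrafilter.nonempty_of_mem (inter_mem (mem_bind'.1 hs) h)
      exact hBA.mono (inter_subset_inter_left A hBs)
    obtain ⟨u, hu⟩ := Ultrafilter.exists_le ((𝔉 : Filter (Set α)).bind 𝓟 ⊓ 𝓟 A)
    exact ⟨u, mem_ultrafilterPowersetDelta_iff.2 (hu.trans inf_le_left),
      le_principal_iff.1 (hu.trans inf_le_right)⟩

theorem mem_ultrafilterJoin {G : Ultrafilter (Ultrafilter α)} {s : Set α} :
    s ∈ ultrafilterJoin G ↔ {u : Ultrafilter α | s ∈ u} ∈ G :=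
  mem_bind'

theorem ultrafilterJoin_mem_ultrafilterPowersetDelta {G : Ultrafilter (Ultrafilter (Set α))}
    {H : Ultrafilter (Ultrafilter α)}
    (hH : H ∈ ultrafilterPowersetDelta (Ultrafilter α) (G.map (ultrafilterPowersetDelta α))) :
    ultrafilterJoin H ∈ ultrafilterPowersetDelta α (ultrafilterJoin G) := by
  intro 𝒜 h𝒜
  have hS : 𝒫 {u : Ultrafilter α | ⋃₀ 𝒜 ∈ u} ∈ G.map (ultrafilterPowersetDelta α) :=
    Ultrafilter.mem_map.2 <|
      mem_of_superset (mem_ultrafilterJoin.1 h𝒜) fun _ hFF _ hu => hu 𝒜 hFF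
  exact mem_ultrafilterJoin.2 (mem_of_superset (hH _ hS) (sUnion_subset fun _ ht => ht))

theorem exists_mem_ultrafilterPowersetDelta_ultrafilterJoin_eq
    {G : Ultrafilter (Ultrafilter (Set α))} {F : Ultrafilter α}
    (hF : F ∈ ultrafilterPowersetDelta α (ultrafilterJoin G)) :
    ∃ H ∈ ultrafilterPowersetDelta (Ultrafilter α) (G.map (ultrafilterPowersetDelta α)),
      ultrafilterJoin H = F := by
  set 𝔖 := (G.map (ultrafilterPowersetDelta α) : Filter (Set (Ultrafilter α)))
  have : (𝔖.bind 𝓟 ⊓ 𝓝 F).NeBot := by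
    refine inf_neBot_iff.2 fun S hS t ht => ?_
    obtain ⟨_, ⟨A, rfl⟩, hAF, hAt⟩ := ultrafilterBasis_is_basis.mem_nhds_iff.1 ht
    have hmeets := exists_mem_ultrafilterPowersetDelta_iff.1 ⟨F, hF, hAF⟩
    have hδS : {FF | ultrafilterPowersetDelta α FF ⊆ S} ∈ G := mem_bind'.1 hS
    obtain ⟨FF, hFFS, hFFA⟩ :=
      Ultrafilter.nonempty_of_mem (inter_mem hδS (mem_ultrafilterJoin.1 hmeets))
    obtain ⟨u, hu, hAu⟩ := exists_mem_ultrafilterPowersetDelta_iff.2 hFFA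
    exact ⟨u, hFFS hu, hAt hAu⟩
  obtain ⟨H, hH⟩ := Ultrafilter.exists_le (𝔖.bind 𝓟 ⊓ 𝓝 F)
  exact ⟨H, mem_ultrafilterPowersetDelta_iff.2 (hH.trans inf_le_left),
    (ultrafilter_converges_iff.1 (hH.trans inf_le_right)).symm⟩

end

/-- the weak distributive law `δ : βP ⇒ Pβ` satisfies the multiplicativity
axiom for the ultrafilter monad: `δ_X ∘ μ^β_{PX} = P(μ^β_X) ∘ δ_{βX} ∘ β(δ_X)` as maps
`ββPX → PβX`. -/
theorem delta_mult_compatibility {X : Type*} (G : Ultrafilter (Ultrafilter (Set X))) :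
    ultrafilterPowersetDelta X (ultrafilterJoin G)
      = ultrafilterJoin ''
          (ultrafilterPowersetDelta (Ultrafilter X)
            (Ultrafilter.map (fun FF => ultrafilterPowersetDelta X FF) G)) := by
  ext F
  constructor
  · exact exists_mem_ultrafilterPowersetDelta_ultrafilterJoin_eq
  · rintro ⟨H, hH, rfl⟩
    exact ultrafilterJoin_mem_ultrafilterPowersetDelta hH
end
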